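/- arXiv:0910.4477 — 2 statements merged into one kernel-verified Lean document; each statement's English description precedes it below -/
import Mathlib

section
/- In the Laurent polynomial ring Z[Y_a^{±1} : a ∈ C*], call a monomial m = Π_a Y_a^{u_a} 'right negative with respect to a base d and parameter q' if m ∈ Z[Y_{dq^r}^{±1} : r ≥ 0] and there exists s with u_{dq^s} < 0 such that u_{dq^r} > 0 implies r < s. Then the product of two right-negative monomials (with the same base d and q not a root of unity) is right negative. In particular, a product of right-negative monomials is never equal to 1. -/
/-!
The witness for a product is `s = max s₁ s₂`: a positive exponent of either factor at `dqˢ`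
would force `s < sᵢ`, so the factor whose witness is `s` makes the product's exponent negative
there, and a positive exponent of the product at `dqʳ` comes from some factor, so `r < sᵢ ≤ s`.
A right-negative monomial has a negative exponent, so it is not `1`.
-/

/-- A (Laurent) monomial `m = Π_a Y_a^{u_a}` — encoded additively as its finitely
supported exponent function — is *right negative* with respect to base `d` and
parameter `q` if it is supported on `{d qʳ : r ∈ ℕ}` and there is an `s` with
`u_{dqˢ} < 0` such that every `r` with `u_{dqʳ} > 0` satisfies `r < s`. -/
def RightNeg (q d : ℂ) (m : ℂ →₀ ℤ) : Prop :=
  (∀ a : ℂ, m a ≠ 0 → ∃ r : ℕ, a = d * q ^ r) ∧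
  ∃ s : ℕ, m (d * q ^ s) < 0 ∧ ∀ r : ℕ, 0 < m (d * q ^ r) → r < s

namespace RightNeg

variable {q d : ℂ} {m m₁ m₂ : ℂ →₀ ℤ}

theorem add (h₁ : RightNeg q d m₁) (h₂ : RightNeg q d m₂) : RightNeg q d (m₁ + m₂) := by
  obtain ⟨supp₁, s₁, neg₁, pos₁⟩ := h₁
  obtain ⟨supp₂, s₂, neg₂, pos₂⟩ := h₂
  refine ⟨fun a ha => ?_, max s₁ s₂, ?_, fun r hr => ?_⟩
  · by_cases h : m₁ a = 0
    · exact supp₂ a (by simpa [h] using ha)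
    · exact supp₁ a h
  · have nonpos₁ : m₁ (d * q ^ max s₁ s₂) ≤ 0 :=
      not_lt.1 fun h => (pos₁ _ h).not_ge le_sup_left
    have nonpos₂ : m₂ (d * q ^ max s₁ s₂) ≤ 0 :=
      not_lt.1 fun h => (pos₂ _ h).not_ge le_sup_right
    rw [Finsupp.add_apply]
    rcases max_choice s₁ s₂ with hs | hs <;> rw [hs] at nonpos₁ nonpos₂ ⊢ <;> omega
  · rw [Finsupp.add_apply] at hr
    rcases lt_or_ge 0 (m₁ (d * q ^ r)) with h | h
    · exact lt_max_of_lt_left (pos₁ r h)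
    · exact lt_max_of_lt_right (pos₂ r (by omega))

theorem list_sum {ms : List (ℂ →₀ ℤ)} (hne : ms ≠ []) (hms : ∀ m ∈ ms, RightNeg q d m) :
    RightNeg q d ms.sum :=
  List.sum_induction_nonempty _ (fun _ _ => add) hne hms

theorem ne_zero (h : RightNeg q d m) : m ≠ 0 := by
  obtain ⟨-, s, hs, -⟩ := h
  rintro rfl
  exact hs.false

end RightNeg

theorem statement8_general (q d : ℂ)
    (m₁ m₂ : ℂ →₀ ℤ) (h₁ : RightNeg q d m₁) (h₂ : RightNeg q d m₂) :
    RightNeg q d (m₁ + m₂) ∧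
    ∀ (ms : List (ℂ →₀ ℤ)), ms ≠ [] → (∀ m ∈ ms, RightNeg q d m) → ms.sum ≠ 0 :=
  ⟨h₁.add h₂, fun _ hne hms => (RightNeg.list_sum hne hms).ne_zero⟩

/-- the product (= sum of exponent functions) of two right-negative
monomials with the same base is right negative; in particular, a (nonempty) product
of right-negative monomials is never the unit monomial `1` (= `0` additively). -/
theorem statement8 (q d : ℂ) (hq : q ≠ 0) (hd : d ≠ 0)
    (hnru : ∀ n : ℕ, 0 < n → q ^ n ≠ 1)
    (m₁ m₂ : ℂ →₀ ℤ) (h₁ : RightNeg q d m₁) (h₂ : RightNeg q d m₂) :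
    RightNeg q d (m₁ + m₂) ∧
    ∀ (ms : List (ℂ →₀ ℤ)), ms ≠ [] → (∀ m ∈ ms, RightNeg q d m) → ms.sum ≠ 0 :=
  statement8_general q d m₁ m₂ h₁ h₂
end

section
/- Let V be a finite-dimensional simple type-1 U_q(ŝl_2)-module (q not a root of unity), with q-character χ_q(V) a sum of monomials in Z[Y_b^{±1} : b ∈ C*]. Suppose for some a ∈ C* and n > 0, χ_q(V) contains a dominant monomial m such that Y_a^n divides m and Y_{aq^2} does not divide m. Then either (i) χ_q(V) contains the monomials m·A_{aq}^{−p} for all 1 ≤ p ≤ n, where A_b = Y_{bq} Y_{bq^{−1}}; or (ii) there exists k > 0 such that χ_q(V) contains the monomial m·A_{aq^k}. -/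
/-!
A monomial of `χ_q(V)` is a sum over the tensor factors of Kirillov–Reshetikhin monomials, and
the step `t → t + 1` inside a factor removes its highest remaining `Y`, at `KRmon.top`, and adds
a `Y⁻¹` two places above it: it multiplies by `A⁻¹_{top·q}`. If the last step taken in some
factor was `A⁻¹_{aq}`, undoing it gives `m A_{aq}`, case (ii) with `k = 1`. Otherwise, comparing
the exponents of `Y_a` and `Y_{aq²}` factor by factor, a factor can give `Y_a` a larger exponent
than `Y_{aq²}` only if its top is exactly `a`, and then by one. As `m` contains `Y_a^n` and no
`Y_{aq²}`, at least `n` factors have top `a`, and advancing `p` of them gives `m A_{aq}^{-p}`.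
-/

open scoped BigOperators Classical

/-- The `t`-th monomial of the q-character of the Kirillov–Reshetikhin module `W_a^{(r)}`
of `U_q(ŝl₂)`, encoded additively as a finitely supported exponent function. -/
noncomputable def KRmon (q a : ℂ) (r t : ℕ) : ℂ →₀ ℤ :=
  (∑ l ∈ Finset.Icc 1 (r - t), Finsupp.single (a * q ^ (-(r : ℤ) - 1 + 2 * (l : ℤ))) 1)
    - ∑ l ∈ Finset.Icc 1 t, Finsupp.single (a * q ^ ((r : ℤ) + 3 - 2 * (l : ℤ))) 1

/-- The segment `S_r(a) = {aq^{−r+1}, aq^{−r+3}, …, aq^{r−1}}`. -/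
noncomputable def Seg (q a : ℂ) (r : ℕ) : Finset ℂ :=
  (Finset.range r).image fun l => a * q ^ (-(r : ℤ) + 1 + 2 * (l : ℤ))

/-- Two segments are in *special position* if their union is a segment and neither
contains the other. -/
def SpecialPos (q a₁ : ℂ) (r₁ : ℕ) (a₂ : ℂ) (r₂ : ℕ) : Prop :=
  (∃ (b : ℂ) (m : ℕ), Seg q a₁ r₁ ∪ Seg q a₂ r₂ = Seg q b m) ∧
  ¬ Seg q a₁ r₁ ⊆ Seg q a₂ r₂ ∧ ¬ Seg q a₂ r₂ ⊆ Seg q a₁ r₁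

lemma zpow_injective_of_pow_ne_one {q : ℂ} (hq : q ≠ 0) (hnru : ∀ n : ℕ, 0 < n → q ^ n ≠ 1) :
    Function.Injective fun j : ℤ => q ^ j := by
  have hfin : ¬IsOfFinOrder (Units.mk0 q hq) := by
    rw [← Units.isOfFinOrder_val, isOfFinOrder_iff_pow_eq_one]
    rintro ⟨n, hn, h⟩
    exact hnru n hn h
  intro i j h
  exact injective_zpow_iff_not_isOfFinOrder.2 hfin (Units.ext (by simpa using h))

namespace KRmon

def posExps (r t : ℕ) : Finset ℤ :=
  (Finset.Icc 1 (r - t)).image fun l : ℕ => -(r : ℤ) - 1 + 2 * l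

def negExps (r t : ℕ) : Finset ℤ :=
  (Finset.Icc 1 t).image fun l : ℕ => (r : ℤ) + 3 - 2 * l

noncomputable def top (q b : ℂ) (r t : ℕ) : ℂ := b * q ^ ((r : ℤ) - 1 - 2 * t)

variable {q b : ℂ} {r t : ℕ}

lemma mem_posExps {j : ℤ} :
    j ∈ posExps r t ↔ -(r : ℤ) + 1 ≤ j ∧ j ≤ r - 1 - 2 * t ∧ (j + r) % 2 = 1 := by
  simp only [posExps, Finset.mem_image, Finset.mem_Icc]
  constructor
  · rintro ⟨l, hl, rfl⟩
    omega
  · intro hj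
    exact ⟨((j + r + 1) / 2).toNat, by omega, by omega⟩

lemma mem_negExps {j : ℤ} :
    j ∈ negExps r t ↔ (r : ℤ) + 3 - 2 * t ≤ j ∧ j ≤ r + 1 ∧ (j + r) % 2 = 1 := by
  simp only [negExps, Finset.mem_image, Finset.mem_Icc]
  constructor
  · rintro ⟨l, hl, rfl⟩
    omega
  · intro hj
    exact ⟨((r + 3 - j) / 2).toNat, by omega, by omega⟩

lemma eq_sum_posExps_sub_sum_negExps (q b : ℂ) (r t : ℕ) :
    KRmon q b r t = ∑ j ∈ posExps r t, Finsupp.single (b * q ^ j) 1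
      - ∑ j ∈ negExps r t, Finsupp.single (b * q ^ j) 1 := by
  rw [posExps, negExps, Finset.sum_image (fun _ _ _ _ h => by omega),
    Finset.sum_image (fun _ _ _ _ h => by omega), KRmon]

lemma sum_single_mul_zpow_apply (hinj : Function.Injective fun j : ℤ => q ^ j) (hb : b ≠ 0)
    (s : Finset ℤ) (i : ℤ) :
    (∑ j ∈ s, Finsupp.single (b * q ^ j) (1 : ℤ)) (b * q ^ i) = if i ∈ s then 1 else 0 := by
  simp only [Finsupp.finsetSum_apply, Finsupp.single_apply,
    (mul_right_injective₀ hb).eq_iff, hinj.eq_iff, Finset.sum_ite_eq']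

lemma sum_single_mul_zpow_apply_of_forall_ne {c : ℂ} (hc : ∀ j : ℤ, b * q ^ j ≠ c)
    (s : Finset ℤ) : (∑ j ∈ s, Finsupp.single (b * q ^ j) (1 : ℤ)) c = 0 := by
  simp only [Finsupp.finsetSum_apply, Finsupp.single_apply, hc, if_false, Finset.sum_const_zero]

lemma apply_mul_zpow (hinj : Function.Injective fun j : ℤ => q ^ j) (hb : b ≠ 0) (i : ℤ) :
    KRmon q b r t (b * q ^ i)
      = (if i ∈ posExps r t then 1 else 0) - if i ∈ negExps r t then 1 else 0 := by
  rw [eq_sum_posExps_sub_sum_negExps, Finsupp.sub_apply, sum_single_mul_zpow_apply hinj hb,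
    sum_single_mul_zpow_apply hinj hb]

lemma apply_of_forall_ne {c : ℂ} (hc : ∀ j : ℤ, b * q ^ j ≠ c) : KRmon q b r t c = 0 := by
  rw [eq_sum_posExps_sub_sum_negExps, Finsupp.sub_apply, sum_single_mul_zpow_apply_of_forall_ne hc,
    sum_single_mul_zpow_apply_of_forall_ne hc, sub_zero]

lemma top_mul_sq (hq : q ≠ 0) (b : ℂ) (r t : ℕ) :
    top q b r t * q ^ 2 = b * q ^ ((r : ℤ) + 1 - 2 * t) := by
  rw [top, mul_assoc, ← zpow_natCast q 2, ← zpow_add₀ hq]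
  congr 2
  push_cast
  ring

lemma succ_eq (hq : q ≠ 0) (h : t < r) :
    KRmon q b r (t + 1) = KRmon q b r t
      - (Finsupp.single (top q b r t * q ^ 2) 1 + Finsupp.single (top q b r t) 1) := by
  have hpos : posExps r t = insert ((r : ℤ) - 1 - 2 * t) (posExps r (t + 1)) := by
    ext j; simp only [Finset.mem_insert, mem_posExps]; omega
  have hneg : negExps r (t + 1) = insert ((r : ℤ) + 1 - 2 * t) (negExps r t) := by
    ext j; simp only [Finset.mem_insert, mem_negExps]; omega
  have htop_new : (r : ℤ) - 1 - 2 * t ∉ posExps r (t + 1) := by rw [mem_posExps]; omega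
  have hbot_new : (r : ℤ) + 1 - 2 * t ∉ negExps r t := by rw [mem_negExps]; omega
  rw [eq_sum_posExps_sub_sum_negExps, eq_sum_posExps_sub_sum_negExps, hpos, hneg,
    Finset.sum_insert htop_new, Finset.sum_insert hbot_new, top_mul_sq hq, top]
  abel

lemma apply_sub_apply_mul_sq_le (hq : q ≠ 0) (hinj : Function.Injective fun j : ℤ => q ^ j)
    (hb : b ≠ 0) {a : ℂ} (hlast : ∀ s, t = s + 1 → top q b r s ≠ a) :
    KRmon q b r t a - KRmon q b r t (a * q ^ 2) ≤ if t < r ∧ top q b r t = a then 1 else 0 := by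
  by_cases ha : ∃ i : ℤ, b * q ^ i = a
  · obtain ⟨i, rfl⟩ := ha
    have htop : ∀ s : ℕ, top q b r s = b * q ^ i ↔ (r : ℤ) - 1 - 2 * s = i := fun s =>
      (mul_right_injective₀ hb).eq_iff.trans hinj.eq_iff
    have hlast' : 0 < t → (r : ℤ) + 1 - 2 * t ≠ i := fun ht h =>
      hlast (t - 1) (by omega) ((htop _).2 (by omega))
    have hsq : b * q ^ i * q ^ 2 = b * q ^ (i + 2) := by
      rw [mul_assoc, ← zpow_natCast q 2, ← zpow_add₀ hq, Nat.cast_ofNat]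
    rw [hsq, apply_mul_zpow hinj hb, apply_mul_zpow hinj hb]
    simp only [htop, mem_posExps, mem_negExps]
    split_ifs <;> omega
  · push Not at ha
    have ha2 : ∀ j : ℤ, b * q ^ j ≠ a * q ^ 2 := fun j h => ha (j - 2) (by
      rw [zpow_sub₀ hq, ← mul_div_assoc, h, zpow_ofNat, mul_div_cancel_right₀ _ (pow_ne_zero 2 hq)])
    rw [apply_of_forall_ne ha, apply_of_forall_ne ha2, sub_zero]
    split_ifs <;> norm_num

end KRmon

section Family

open KRmon

variable {T : Type*} [Fintype T] {q : ℂ} {aa : T → ℂ} {rr : T → ℕ} {f : T → ℕ} {a : ℂ}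

lemma sum_KRmon_add_indicator (hq : q ≠ 0) (S : Finset T)
    (hS : ∀ t ∈ S, f t < rr t ∧ top q (aa t) (rr t) (f t) = a) :
    ∑ t, KRmon q (aa t) (rr t) (f t + if t ∈ S then 1 else 0)
      = ∑ t, KRmon q (aa t) (rr t) (f t)
        - S.card • (Finsupp.single (a * q ^ 2) 1 + Finsupp.single a 1) := by
  have hstep : ∀ t, KRmon q (aa t) (rr t) (f t + if t ∈ S then 1 else 0)
      = KRmon q (aa t) (rr t) (f t)
        - if t ∈ S then Finsupp.single (a * q ^ 2) 1 + Finsupp.single a 1 else 0 := by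
    intro t
    split_ifs with ht
    · rw [KRmon.succ_eq hq (hS t ht).1, (hS t ht).2]
    · rw [add_zero, sub_zero]
  rw [Finset.sum_congr rfl fun t _ => hstep t, Finset.sum_sub_distrib, Finset.sum_ite_mem,
    Finset.univ_inter, Finset.sum_const]

lemma apply_sub_apply_mul_sq_le_card (hq : q ≠ 0) (hinj : Function.Injective fun j : ℤ => q ^ j)
    (haa : ∀ t, aa t ≠ 0) (hlast : ∀ s t, f s = t + 1 → top q (aa s) (rr s) t ≠ a) :
    (∑ t, KRmon q (aa t) (rr t) (f t)) a - (∑ t, KRmon q (aa t) (rr t) (f t)) (a * q ^ 2)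
      ≤ (Finset.univ.filter fun t => f t < rr t ∧ top q (aa t) (rr t) (f t) = a).card := by
  rw [Finsupp.finsetSum_apply, Finsupp.finsetSum_apply, ← Finset.sum_sub_distrib,
    Finset.card_filter]
  push_cast
  exact Finset.sum_le_sum fun t _ =>
    apply_sub_apply_mul_sq_le hq hinj (haa t) (hlast t)

lemma exists_sum_KRmon_eq_sub (hq : q ≠ 0) (hf : ∀ t, f t ≤ rr t) {p : ℕ}
    (hp : p ≤ (Finset.univ.filter fun t => f t < rr t ∧ top q (aa t) (rr t) (f t) = a).card) :
    ∃ g : T → ℕ, (∀ t, g t ≤ rr t) ∧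
      ∑ t, KRmon q (aa t) (rr t) (f t)
          - (p : ℤ) • (Finsupp.single (a * q ^ 2) 1 + Finsupp.single a 1)
        = ∑ t, KRmon q (aa t) (rr t) (g t) := by
  obtain ⟨S, hSG, rfl⟩ := Finset.exists_subset_card_eq hp
  have hS : ∀ t ∈ S, f t < rr t ∧ top q (aa t) (rr t) (f t) = a := fun t ht =>
    (Finset.mem_filter.1 (hSG ht)).2
  refine ⟨fun t => f t + if t ∈ S then 1 else 0, fun t => ?_, ?_⟩
  · dsimp only
    split_ifs with ht
    · exact (hS t ht).1
    · exact hf t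
  · rw [sum_KRmon_add_indicator hq S hS, natCast_zsmul]

lemma exists_sum_KRmon_eq_add (hq : q ≠ 0) (hf : ∀ t, f t ≤ rr t) {s : T} {t : ℕ}
    (hst : f s = t + 1) (htop : top q (aa s) (rr s) t = a) :
    ∃ g : T → ℕ, (∀ u, g u ≤ rr u) ∧
      ∑ u, KRmon q (aa u) (rr u) (f u)
          + (Finsupp.single (a * q ^ 2) 1 + Finsupp.single a 1)
        = ∑ u, KRmon q (aa u) (rr u) (g u) := by
  set g := Function.update f s t
  have hgs : g s = t := Function.update_self s t f
  have hgu : ∀ u ≠ s, g u = f u := fun u hu => Function.update_of_ne hu t f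
  have hf_eq : f = fun u => g u + if u ∈ ({s} : Finset T) then 1 else 0 := by
    funext u
    by_cases hu : u = s
    · subst hu
      rw [hgs, if_pos (Finset.mem_singleton_self u), hst]
    · rw [hgu u hu, if_neg (by simpa using hu), add_zero]
  have hS : ∀ u ∈ ({s} : Finset T), g u < rr u ∧ top q (aa u) (rr u) (g u) = a := by
    intro u hu
    rw [Finset.mem_singleton.1 hu, hgs]
    exact ⟨by have := hf s; omega, htop⟩
  refine ⟨g, fun u => ?_, ?_⟩
  · by_cases hu : u = s
    · subst hu
      have := hf u
      omega
    · rw [hgu u hu]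
      exact hf u
  · rw [hf_eq, sum_KRmon_add_indicator hq _ hS, Finset.card_singleton, one_smul, sub_add_cancel]

end Family

theorem statement16_general (q : ℂ) (hq : q ≠ 0)
    (hnru : ∀ n : ℕ, 0 < n → q ^ n ≠ 1)
    {T : Type*} [Fintype T] (aa : T → ℂ) (rr : T → ℕ)
    (haa : ∀ t, aa t ≠ 0)
    (a : ℂ) (n : ℕ)
    (m : ℂ →₀ ℤ)
    (hmem : ∃ f : T → ℕ, (∀ t, f t ≤ rr t) ∧ m = ∑ t, KRmon q (aa t) (rr t) (f t))
    (hfac : (n : ℤ) ≤ m a)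
    (hnot : m (a * q ^ 2) = 0) :
    (∀ p : ℕ, 1 ≤ p → p ≤ n →
      ∃ f : T → ℕ, (∀ t, f t ≤ rr t) ∧
        m - (p : ℤ) • (Finsupp.single (a * q ^ 2) 1 + Finsupp.single a 1)
          = ∑ t, KRmon q (aa t) (rr t) (f t)) ∨
    (∃ k : ℕ, 0 < k ∧ ∃ f : T → ℕ, (∀ t, f t ≤ rr t) ∧
        m + (Finsupp.single (a * q ^ (k + 1)) 1 + Finsupp.single (a * q ^ (k - 1)) 1)
          = ∑ t, KRmon q (aa t) (rr t) (f t)) := by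
  obtain ⟨f, hf, rfl⟩ := hmem
  by_cases hlast : ∃ s t, f s = t + 1 ∧ KRmon.top q (aa s) (rr s) t = a
  · obtain ⟨s, t, hst, htop⟩ := hlast
    refine Or.inr ⟨1, one_pos, ?_⟩
    simpa using exists_sum_KRmon_eq_add hq hf hst htop
  · push Not at hlast
    have hcard : n ≤
        (Finset.univ.filter fun t => f t < rr t ∧ KRmon.top q (aa t) (rr t) (f t) = a).card := by
      have h := apply_sub_apply_mul_sq_le_card hq (zpow_injective_of_pow_ne_one hq hnru) haa hlast
      rw [hnot, sub_zero] at h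
      exact_mod_cast hfac.trans h
    exact Or.inl fun p _ hp => exists_sum_KRmon_eq_sub hq hf (hp.trans hcard)

/-- let `V = ⊗_{t∈T} W_{a_t}^{(r_t)}` be a simple finite-dimensional type-1
`U_q(ŝl₂)`-module (segments pairwise in general position); its q-character consists of the
monomials `Σ_t KRmon q (a_t) (r_t) (f t)`, `f t ≤ r_t`. If `χ_q(V)` contains a dominant
monomial `m` with `Y_a^n ∣ m` (`n > 0`) and `Y_{aq²} ∤ m`, then either (i) `χ_q(V)`
contains `m A_{aq}^{−p}` for all `1 ≤ p ≤ n`, or (ii) `χ_q(V)` contains `m A_{aq^k}` for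
some `k > 0`, where `A_b = Y_{bq} Y_{bq^{−1}}`. -/
theorem statement16 (q : ℂ) (hq : q ≠ 0)
    (hnru : ∀ n : ℕ, 0 < n → q ^ n ≠ 1)
    {T : Type*} [Fintype T] (aa : T → ℂ) (rr : T → ℕ)
    (haa : ∀ t, aa t ≠ 0) (hrr : ∀ t, 1 ≤ rr t)
    (hgen : ∀ t t' : T, t ≠ t' → ¬ SpecialPos q (aa t) (rr t) (aa t') (rr t'))
    (a : ℂ) (ha : a ≠ 0) (n : ℕ) (hn : 0 < n)
    (m : ℂ →₀ ℤ)
    (hmem : ∃ f : T → ℕ, (∀ t, f t ≤ rr t) ∧ m = ∑ t, KRmon q (aa t) (rr t) (f t))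
    (hdom : ∀ b : ℂ, 0 ≤ m b)
    (hfac : (n : ℤ) ≤ m a)
    (hnot : m (a * q ^ 2) = 0) :
    (∀ p : ℕ, 1 ≤ p → p ≤ n →
      ∃ f : T → ℕ, (∀ t, f t ≤ rr t) ∧
        m - (p : ℤ) • (Finsupp.single (a * q ^ 2) 1 + Finsupp.single a 1)
          = ∑ t, KRmon q (aa t) (rr t) (f t)) ∨
    (∃ k : ℕ, 0 < k ∧ ∃ f : T → ℕ, (∀ t, f t ≤ rr t) ∧
        m + (Finsupp.single (a * q ^ (k + 1)) 1 + Finsupp.single (a * q ^ (k - 1)) 1)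
          = ∑ t, KRmon q (aa t) (rr t) (f t)) :=
  statement16_general q hq hnru aa rr haa a n m hmem hfac hnot
end
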